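/- arXiv:0805.1130 — 2 statements merged into one kernel-verified Lean document; each statement's English description precedes it below -/
import Mathlib

section
/- For every Nash equilibrium S* of the game Γ_n and every gadget index 0 ≤ i < n, the congestions are uniquely determined: n_{i,0}(S*) = 3n and n_{i,1}(S*) = n_{i,2}(S*) = n. -/
/-- A state of the game `Γ_n`: `s i j k` is the strategy played by the `k`-th type-`j`
player of gadget `G_i` (`false` = 0-strategy, `true` = 1-strategy). -/
abbrev GState (n : ℕ) := Fin n → Fin 5 → Fin n → Bool

/-- `cb s b i j` = the number `c^b_{i,j}(s)` of type-`j` players of gadget `G_i`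
playing their `b`-strategy in state `s`. -/
def cb {n : ℕ} (s : GState n) (b : Bool) (i : Fin n) (j : Fin 5) : ℕ :=
  (Finset.univ.filter fun k => s i j k = b).card

/-- Congestion `n_{i,0}(s)` of resource `r_{i,0}` (which coincides with `r_{i-1,3}`):
it is allocated by the type-0, type-2 and type-4 players of `G_i` playing their
0-strategy and the type-1, type-3 and type-4 players of `G_{i-1}` playing their
1-strategy. -/
def congR0 {n : ℕ} [NeZero n] (s : GState n) (i : Fin n) : ℕ :=
  cb s false i 0 + cb s false i 2 + cb s false i 4 +
    cb s true (i - 1) 1 + cb s true (i - 1) 3 + cb s true (i - 1) 4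

/-- Congestion `n_{i,1}(s)` of resource `r_{i,1}`. -/
def congR1 {n : ℕ} (s : GState n) (i : Fin n) : ℕ := cb s true i 0 + cb s false i 1

/-- Congestion `n_{i,2}(s)` of resource `r_{i,2}`. -/
def congR2 {n : ℕ} (s : GState n) (i : Fin n) : ℕ := cb s true i 2 + cb s false i 3

/-- The thresholds `t_0 = 3n`, `t_1 = n-1`, `t_2 = 3n-2`, `t_3 = n-1`, `t_4 = 3n-1`. -/
def threshold (n : ℕ) : Fin 5 → ℕ := ![3 * n, n - 1, 3 * n - 2, n - 1, 3 * n - 1]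

/-- The congestion of the 0-strategy resource of a type-`j` player of gadget `G_i`
(`r_{i,0}` for types 0, 2, 4; `r_{i,1}` for type 1; `r_{i,2}` for type 3). -/
def res0cong {n : ℕ} [NeZero n] (s : GState n) (i : Fin n) : Fin 5 → ℕ :=
  ![congR0 s i, congR1 s i, congR0 s i, congR2 s i, congR0 s i]

/-- `s` is a Nash equilibrium of `Γ_n`: every player plays its best response, where the
0-strategy of a type-`j` player is its (unique) best response iff the number of *other*
players allocating its 0-strategy resource is at most `threshold n j`, and otherwise its
1-strategy is its best response. -/
def IsNashG {n : ℕ} [NeZero n] (s : GState n) : Prop :=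
  ∀ (i : Fin n) (j : Fin 5) (k : Fin n),
    (s i j k = false → res0cong s i j - 1 ≤ threshold n j) ∧
    (s i j k = true → threshold n j < res0cong s i j)

/-!
Types 1 and 3 sit on a resource shared only with one other type of the same gadget, and their
threshold `n - 1` pins that congestion to exactly `n`; hence `c¹_{i,0} = c¹_{i,1}` and
`c¹_{i,2} = c¹_{i,3}`. With `U_i = c¹_{i,0} + c¹_{i,2} + c¹_{i,4}` this gives
`n_{i,0} = 3n - U_i + U_{i-1}`, so the congestions `n_{i,0}` sum to `3n²` around the circle.
The thresholds of types 0, 2, 4 keep `n_{i,0}` within `3n ± 1`, and each of the values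
`3n + 1` and `3n - 1` propagates from `G_i` to `G_{i-1}`; by the sum, neither can occur.
-/

open Finset

theorem Fin.forall_of_sub_one_closed {n : ℕ} [NeZero n] {P : Fin n → Prop}
    (hstep : ∀ i, P i → P (i - 1)) {i₀ : Fin n} (h₀ : P i₀) (i : Fin n) : P i := by
  open Fin.NatCast Fin.CommRing in
  have hiter : ∀ m : ℕ, P (i₀ - m) := by
    intro m
    induction m with
    | zero => simpa using h₀
    | succ m ih => simpa [sub_add_eq_sub_sub] using hstep _ ih
  open Fin.NatCast in
  simpa using hiter (i₀ - i).val

section Counts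

variable {n : ℕ} (s : GState n)

theorem cb_false_add_cb_true (i : Fin n) (j : Fin 5) : cb s false i j + cb s true i j = n := by
  simpa [cb] using card_filter_add_card_filter_not
    (s := (univ : Finset (Fin n))) (p := fun k => s i j k = false)

theorem cb_le (b : Bool) (i : Fin n) (j : Fin 5) : cb s b i j ≤ n := by
  have := cb_false_add_cb_true s i j
  cases b <;> omega

theorem exists_eq_of_cb_ne_zero {b : Bool} {i : Fin n} {j : Fin 5} (h : cb s b i j ≠ 0) :
    ∃ k, s i j k = b := by
  obtain ⟨k, hk⟩ := card_ne_zero.mp h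
  exact ⟨k, (mem_filter.mp hk).2⟩

/-- `U_i` of the header: the players of types 0, 2, 4 of `G_i` that have left `r_{i,0}`. -/
def outflow (i : Fin n) : ℕ := cb s true i 0 + cb s true i 2 + cb s true i 4

end Counts

namespace IsNashG

variable {n : ℕ} [NeZero n] {s : GState n} (h : IsNashG s)
include h

theorem sub_one_le_threshold {i : Fin n} {j : Fin 5} (hc : cb s false i j ≠ 0) :
    res0cong s i j - 1 ≤ threshold n j := by
  obtain ⟨k, hk⟩ := exists_eq_of_cb_ne_zero s hc
  exact (h i j k).1 hk

theorem threshold_lt {i : Fin n} {j : Fin 5} (hc : cb s true i j ≠ 0) :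
    threshold n j < res0cong s i j := by
  obtain ⟨k, hk⟩ := exists_eq_of_cb_ne_zero s hc
  exact (h i j k).2 hk

theorem congR1_eq (i : Fin n) : congR1 s i = n := by
  have hF : cb s false i 1 ≠ 0 → congR1 s i - 1 ≤ n - 1 := h.sub_one_le_threshold
  have hT : cb s true i 1 ≠ 0 → n - 1 < congR1 s i := h.threshold_lt
  have := cb_false_add_cb_true s i 1
  have := cb_le s true i 0
  unfold congR1 at *
  omega

theorem congR2_eq (i : Fin n) : congR2 s i = n := by
  have hF : cb s false i 3 ≠ 0 → congR2 s i - 1 ≤ n - 1 := h.sub_one_le_threshold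
  have hT : cb s true i 3 ≠ 0 → n - 1 < congR2 s i := h.threshold_lt
  have := cb_false_add_cb_true s i 3
  have := cb_le s true i 2
  unfold congR2 at *
  omega

theorem congR0_add_outflow (i : Fin n) :
    congR0 s i + outflow s i = 3 * n + outflow s (i - 1) := by
  have h1 := h.congR1_eq (i - 1)
  have h2 := h.congR2_eq (i - 1)
  have := cb_false_add_cb_true s (i - 1) 1
  have := cb_false_add_cb_true s (i - 1) 3
  have := cb_false_add_cb_true s i 0
  have := cb_false_add_cb_true s i 2
  have := cb_false_add_cb_true s i 4
  unfold congR0 congR1 congR2 outflow at *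
  omega

theorem sum_congR0 : ∑ i, congR0 s i = 3 * n * n := by
  have hsum := sum_congr rfl fun i (_ : i ∈ univ) => h.congR0_add_outflow i
  have hshift : ∑ i, outflow s (i - 1) = ∑ i, outflow s i :=
    (Equiv.subRight (1 : Fin n)).sum_comp (outflow s)
  rw [sum_add_distrib, sum_add_distrib, hshift] at hsum
  simpa [mul_comm] using hsum

theorem congR0_mem_Icc (i : Fin n) : congR0 s i ∈ Set.Icc (3 * n - 1) (3 * n + 1) := by
  have hF0 : cb s false i 0 ≠ 0 → congR0 s i - 1 ≤ 3 * n := h.sub_one_le_threshold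
  have hF2 : cb s false i 2 ≠ 0 → congR0 s i - 1 ≤ 3 * n - 2 := h.sub_one_le_threshold
  have hF4 : cb s false i 4 ≠ 0 → congR0 s i - 1 ≤ 3 * n - 1 := h.sub_one_le_threshold
  have hT0 : cb s true i 0 ≠ 0 → 3 * n < congR0 s i := h.threshold_lt
  have hT2 : cb s true i 2 ≠ 0 → 3 * n - 2 < congR0 s i := h.threshold_lt
  have hT4 : cb s true i 4 ≠ 0 → 3 * n - 1 < congR0 s i := h.threshold_lt
  have := cb_false_add_cb_true s i 0
  have := cb_false_add_cb_true s i 2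
  have := cb_false_add_cb_true s i 4
  have := cb_le s true (i - 1) 1
  have := cb_le s true (i - 1) 3
  have := cb_le s true (i - 1) 4
  unfold congR0 at *
  constructor <;> omega

/-- At `3n + 1` all type-2 and type-4 players of `G_i` leave `r_{i,0}`, so `U_{i-1} > 2n`
and some type-0 player of `G_{i-1}` has left `r_{i-1,0}`. -/
theorem congR0_sub_one_eq_of_eq_succ {i : Fin n} (hi : congR0 s i = 3 * n + 1) :
    congR0 s (i - 1) = 3 * n + 1 := by
  have hF2 : cb s false i 2 ≠ 0 → congR0 s i - 1 ≤ 3 * n - 2 := h.sub_one_le_threshold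
  have hF4 : cb s false i 4 ≠ 0 → congR0 s i - 1 ≤ 3 * n - 1 := h.sub_one_le_threshold
  have hT0 : cb s true (i - 1) 0 ≠ 0 → 3 * n < congR0 s (i - 1) := h.threshold_lt
  have := h.congR0_add_outflow i
  have := h.congR0_mem_Icc (i - 1)
  have := cb_false_add_cb_true s i 2
  have := cb_false_add_cb_true s i 4
  have := cb_le s true (i - 1) 2
  have := cb_le s true (i - 1) 4
  simp only [outflow, Set.mem_Icc] at *
  omega

/-- At `3n - 1` all type-0 and type-4 players of `G_i` stay on `r_{i,0}`, so `U_{i-1} < n`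
and some type-2 player of `G_{i-1}` stays on `r_{i-1,0}`. -/
theorem congR0_sub_one_eq_of_eq_pred {i : Fin n} (hi : congR0 s i = 3 * n - 1) :
    congR0 s (i - 1) = 3 * n - 1 := by
  have hT0 : cb s true i 0 ≠ 0 → 3 * n < congR0 s i := h.threshold_lt
  have hT4 : cb s true i 4 ≠ 0 → 3 * n - 1 < congR0 s i := h.threshold_lt
  have hF2 : cb s false (i - 1) 2 ≠ 0 → congR0 s (i - 1) - 1 ≤ 3 * n - 2 :=
    h.sub_one_le_threshold
  have := h.congR0_add_outflow i
  have := h.congR0_mem_Icc (i - 1)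
  have := cb_le s true i 2
  have := cb_false_add_cb_true s (i - 1) 2
  have := NeZero.pos n
  simp only [outflow, Set.mem_Icc] at *
  omega

theorem congR0_ne_of_sub_one_closed {c : ℕ} (hc : c ≠ 3 * n)
    (hstep : ∀ i, congR0 s i = c → congR0 s (i - 1) = c) (i : Fin n) : congR0 s i ≠ c := by
  intro hi
  have hsum := h.sum_congR0
  simp only [Fin.forall_of_sub_one_closed hstep hi, sum_const, card_univ, Fintype.card_fin,
    smul_eq_mul] at hsum
  exact hc (Nat.eq_of_mul_eq_mul_left (NeZero.pos n) (by linarith))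

end IsNashG

theorem gadget_nash_unique_congestions_general
    (n : ℕ) [NeZero n]
    (s : GState n) (hnash : IsNashG s) :
    ∀ i : Fin n, congR0 s i = 3 * n ∧ congR1 s i = n ∧ congR2 s i = n := by
  intro i
  refine ⟨?_, hnash.congR1_eq i, hnash.congR2_eq i⟩
  have hpos := NeZero.pos n
  have hrange := hnash.congR0_mem_Icc i
  have hup := hnash.congR0_ne_of_sub_one_closed (by omega)
    (fun _ => hnash.congR0_sub_one_eq_of_eq_succ) i
  have hdown := hnash.congR0_ne_of_sub_one_closed (by omega)
    (fun _ => hnash.congR0_sub_one_eq_of_eq_pred) i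
  simp only [Set.mem_Icc] at hrange
  omega

/-- For every Nash equilibrium of `Γ_n` and every gadget index `i`, the
congestions are uniquely determined: `n_{i,0} = 3n` and `n_{i,1} = n_{i,2} = n`. -/
theorem gadget_nash_unique_congestions
    (n : ℕ) [NeZero n] (hn : 2 ≤ n) (heven : Even n)
    (s : GState n) (hnash : IsNashG s) :
    ∀ i : Fin n, congR0 s i = 3 * n ∧ congR1 s i = n ∧ congR2 s i = n :=
  gadget_nash_unique_congestions_general n s hnash
end

section
/- For every Nash equilibrium S* of the game Γ_n and every gadget index 0 ≤ i < n, it holds that c^0_{i,0}(S*) ≥ c^0_{i,4}(S*) ≥ c^0_{i,2}(S*), i.e., the number of type-0 players of G_i playing their 0-strategy is at least the number of type-4 players of G_i playing their 0-strategy, which in turn is at least the number of type-2 players of G_i playing their 0-strategy. -/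

lemma cb_le_n {n : ℕ} (s : GState n) (b : Bool) (i : Fin n) (j : Fin 5) :
    cb s b i j ≤ n := by
  simpa [cb] using (Finset.card_filter_le Finset.univ (fun k => s i j k = b))

lemma exists_true_of_lt {n : ℕ} (s : GState n) (i : Fin n) (j : Fin 5)
    (h : cb s false i j < n) : ∃ k, s i j k = true := by
  by_contra hc
  push_neg at hc
  have : ∀ k : Fin n, s i j k = false := by
    intro k; cases hk : s i j k with
    | false => rfl
    | true => exact absurd hk (hc k)
  have : cb s false i j = n := by
    simp [cb, Finset.filter_true_of_mem (fun k _ => this k)]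
  omega

lemma cb_false_eq_zero {n : ℕ} (s : GState n) (i : Fin n) (j : Fin 5)
    (h : ∀ k, s i j k = true) : cb s false i j = 0 := by
  simp [cb, Finset.filter_eq_empty_iff, h]

/-- For every Nash equilibrium of `Γ_n` and every gadget index `i`,
`c^0_{i,0} ≥ c^0_{i,4} ≥ c^0_{i,2}`. -/
theorem gadget_nash_monotone_zero_counts
    (n : ℕ) [NeZero n] (hn : 2 ≤ n) (heven : Even n)
    (s : GState n) (hnash : IsNashG s) :
    ∀ i : Fin n, cb s false i 2 ≤ cb s false i 4 ∧ cb s false i 4 ≤ cb s false i 0 := by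
  intro i
  constructor
  · rcases lt_or_ge (cb s false i 4) n with h | h
    · obtain ⟨k, hk⟩ := exists_true_of_lt s i 4 h
      have h4 : threshold n 4 < res0cong s i 4 := (hnash i 4 k).2 hk
      have ht4 : threshold n 4 = 3 * n - 1 := rfl
      have hr4 : res0cong s i 4 = congR0 s i := rfl
      have hall : ∀ k' : Fin n, s i 2 k' = true := by
        intro k'
        cases hk' : s i 2 k' with
        | true => rfl
        | false =>
          have h2 : res0cong s i 2 - 1 ≤ threshold n 2 := (hnash i 2 k').1 hk'
          have ht2 : threshold n 2 = 3 * n - 2 := rfl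
          have hr2 : res0cong s i 2 = congR0 s i := rfl
          omega
      have := cb_false_eq_zero s i 2 hall
      omega
    · have := cb_le_n s false i 2
      omega
  · rcases lt_or_ge (cb s false i 0) n with h | h
    · obtain ⟨k, hk⟩ := exists_true_of_lt s i 0 h
      have h0 : threshold n 0 < res0cong s i 0 := (hnash i 0 k).2 hk
      have ht0 : threshold n 0 = 3 * n := rfl
      have hr0 : res0cong s i 0 = congR0 s i := rfl
      have hall : ∀ k' : Fin n, s i 4 k' = true := by
        intro k'
        cases hk' : s i 4 k' with
        | true => rfl
        | false =>
          have h4 : res0cong s i 4 - 1 ≤ threshold n 4 := (hnash i 4 k').1 hk'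
          have ht4 : threshold n 4 = 3 * n - 1 := rfl
          have hr4 : res0cong s i 4 = congR0 s i := rfl
          omega
      have := cb_false_eq_zero s i 4 hall
      omega
    · have := cb_le_n s false i 4
      omega
end
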